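/- arXiv:cs/0303019 — 4 statements merged into one kernel-verified Lean document; each statement's English description precedes it below -/
import Mathlib

section
/- Every set S ⊆ ℝⁿ definable by a first-order formula in the theory ⟨ℝ, ℤ, +, ≤⟩ (linear arithmetic over reals and integers) belongs to the Borel class F_σ ∩ G_δ of the natural (Euclidean) topology on ℝⁿ. -/
/-- Formulas of the first-order theory ⟨ℝ, ℤ, +, ≤⟩: atoms are the ternary
addition predicate `x + y = z`, the order `x ≤ y`, and the integrality
predicate `x ∈ ℤ`; formulas are closed under negation, conjunction and
existential quantification (over the reals; quantification over the
integers is expressed by relativizing to the integrality predicate). -/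
inductive LinFml : Type
  | add : ℕ → ℕ → ℕ → LinFml
  | le : ℕ → ℕ → LinFml
  | int : ℕ → LinFml
  | not : LinFml → LinFml
  | and : LinFml → LinFml → LinFml
  | ex : ℕ → LinFml → LinFml

/-- Satisfaction of a formula under a real valuation of the variables. -/
def LinFml.Sat : LinFml → (ℕ → ℝ) → Prop
  | .add i j k, v => v i + v j = v k
  | .le i j, v => v i ≤ v j
  | .int i, v => ∃ z : ℤ, v i = (z : ℝ)
  | .not φ, v => ¬ φ.Sat v
  | .and φ ψ, v => φ.Sat v ∧ ψ.Sat v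
  | .ex i φ, v => ∃ x : ℝ, φ.Sat (Function.update v i x)

/-- `S ⊆ ℝⁿ` is definable in ⟨ℝ, ℤ, +, ≤⟩ if it is the set of values of the
first `n` variables satisfying some formula (other variables being fixed). -/
def LinDefinable {n : ℕ} (S : Set (Fin n → ℝ)) : Prop :=
  ∃ φ : LinFml,
    S = {x | φ.Sat fun i => if h : i < n then x ⟨i, h⟩ else 0}

/-- A set is `F_σ` if it is a countable union of closed sets. -/
def IsFsigma {α : Type*} [TopologicalSpace α] (s : Set α) : Prop :=
  ∃ C : ℕ → Set α, (∀ i, IsClosed (C i)) ∧ s = ⋃ i, C i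

/-!
Write each real as `⌊x⌋ + fract x`. A linear condition on reals splits into an arbitrary
condition on the integer parts and a linear one on the fractional parts in `[0, 1)`: for
instance `a + b = c` iff `⌊a⌋ + ⌊b⌋ + d = ⌊c⌋` and `fract a + fract b - fract c = d` for some
`d ∈ {0, 1}`. Hence every definable set is a finite union of sets
`{v | ⌊v⌋ ∈ Z ∧ fract v ∈ P}` with `Z` arbitrary and `P` quantifier-free definable in
`⟨ℝ, +, ≤⟩`. This class is closed under the Boolean operations and under projection, the latter
because `∃ x ∈ [0, 1)` can be eliminated from `P` by Fourier–Motzkin.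

In `ℝⁿ` such a set is the countable union, over `z ∈ ℤⁿ`, of its parts in the cells
`z + [0, 1)ⁿ`, each a finite Boolean combination of closed and open half-spaces and so `F_σ`.
As the complement of a definable set is definable, the set is also `G_δ`.
-/

open Function Filter Set
open Finsupp (linearCombination single)

section LtOrLe

variable {α : Type*}

def ltOrLe [Preorder α] : Bool → α → α → Prop
  | true, a, b => a < b
  | false, a, b => a ≤ b

lemma ltOrLe_of_lt [Preorder α] {s : Bool} {a b : α} (h : a < b) : ltOrLe s a b := by
  cases s
  exacts [h.le, h]

lemma not_ltOrLe [LinearOrder α] {s : Bool} {a b : α} : ¬ ltOrLe s a b ↔ ltOrLe (!s) b a := by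
  cases s <;> simp [ltOrLe]

lemma exists_ltOrLe_ltOrLe_iff [LinearOrder α] [DenselyOrdered α] {s t : Bool} {a b : α} :
    (∃ x, ltOrLe s a x ∧ ltOrLe t x b) ↔ ltOrLe (s || t) a b := by
  cases s <;> cases t
  exacts [nonempty_Icc, nonempty_Ico, nonempty_Ioc, nonempty_Ioo]

lemma ltOrLe_iff_of_sub_eq_mul [Ring α] [LinearOrder α] [IsStrictOrderedRing α] {s : Bool}
    {a b a' b' k : α} (hk : 0 < k) (h : b - a = k * (b' - a')) :
    ltOrLe s a b ↔ ltOrLe s a' b' := by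
  cases s
  · rw [ltOrLe, ltOrLe, ← sub_nonneg, h, mul_nonneg_iff_of_pos_left hk, sub_nonneg]
  · rw [ltOrLe, ltOrLe, ← sub_pos, h, mul_pos_iff_of_pos_left hk, sub_pos]

end LtOrLe

theorem Finsupp.linearCombination_update {α R M : Type*} [DecidableEq α] [CommSemiring R]
    [AddCommMonoid M] [Module R M] (c : α →₀ R) (v : α → M) (i : α) (x : M) :
    linearCombination R (Function.update v i x) c =
      c i • x + linearCombination R (Function.update v i 0) c := by
  have hv : Function.update v i x = Pi.single i x + Function.update v i 0 := by
    ext j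
    rcases eq_or_ne j i with rfl | h <;> simp [*]
  rw [hv, ← bilinearCombination_apply R (S := R), map_add, LinearMap.add_apply,
    bilinearCombination_apply, bilinearCombination_apply, linearCombination_single_index]

theorem Real.helly_theorem {ι : Type*} {F : ι → Set ℝ} {s : Finset ι}
    (h_convex : ∀ i ∈ s, Convex ℝ (F i)) (h_inter : ∀ i ∈ s, ∀ j ∈ s, (F i ∩ F j).Nonempty) :
    (⋂ i ∈ s, F i).Nonempty := by
  classical
  refine Convex.helly_theorem' h_convex fun I hI hcard => ?_
  rw [Module.finrank_self] at hcard
  interval_cases h : I.card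
  · simp [Finset.card_eq_zero.1 h]
  · obtain ⟨i, rfl⟩ := Finset.card_eq_one.1 h
    simpa using h_inter i (hI (by simp)) i (hI (by simp))
  · obtain ⟨i, j, -, rfl⟩ := Finset.card_eq_two.1 h
    simpa using h_inter i (hI (by simp)) j (hI (by simp))

structure LinIneq where
  coeff : ℕ →₀ ℝ
  bound : ℝ
  strict : Bool

namespace LinIneq

def Holds (L : LinIneq) (v : ℕ → ℝ) : Prop :=
  ltOrLe L.strict (linearCombination ℝ v L.coeff) L.bound

noncomputable def neg (L : LinIneq) : LinIneq := ⟨-L.coeff, -L.bound, !L.strict⟩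

variable {L M : LinIneq} {i : ℕ} {v w : ℕ → ℝ} {x : ℝ}

lemma holds_neg : L.neg.Holds v ↔ ¬ L.Holds v := by
  rw [Holds, Holds, not_ltOrLe]
  exact ltOrLe_iff_of_sub_eq_mul one_pos (by simp only [neg, map_neg]; ring)

/-- The value of the `i`-th variable at which `L` is tight, the other variables given by `w`. -/
noncomputable def root (L : LinIneq) (i : ℕ) (w : ℕ → ℝ) : ℝ :=
  (L.bound - linearCombination ℝ (update w i 0) L.coeff) / L.coeff i

lemma holds_update_iff_of_coeff_eq_zero (h : L.coeff i = 0) :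
    L.Holds (update w i x) ↔ L.Holds w := by
  have hw := L.coeff.linearCombination_update w i (w i)
  rw [update_eq_self] at hw
  rw [Holds, Holds, hw, Finsupp.linearCombination_update, h, zero_smul, zero_smul]

lemma holds_update_iff_of_neg (h : L.coeff i < 0) :
    L.Holds (update w i x) ↔ ltOrLe L.strict (L.root i w) x := by
  rw [Holds, Finsupp.linearCombination_update, smul_eq_mul]
  refine ltOrLe_iff_of_sub_eq_mul (neg_pos.2 h) ?_
  rw [root]
  field_simp [h.ne]
  ring

lemma holds_update_iff_of_pos (h : 0 < L.coeff i) :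
    L.Holds (update w i x) ↔ ltOrLe L.strict x (L.root i w) := by
  rw [Holds, Finsupp.linearCombination_update, smul_eq_mul]
  refine ltOrLe_iff_of_sub_eq_mul h ?_
  rw [root]
  field_simp
  ring

lemma convex_setOf_holds_update (h : L.coeff i ≠ 0) :
    Convex ℝ {x | L.Holds (update w i x)} := by
  rcases h.lt_or_gt with h | h
  · simp_rw [holds_update_iff_of_neg h]
    cases L.strict
    exacts [convex_Ici _, convex_Ioi _]
  · simp_rw [holds_update_iff_of_pos h]
    cases L.strict
    exacts [convex_Iic _, convex_Iio _]

lemma eventually_atTop_holds_update (h : L.coeff i < 0) :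
    ∀ᶠ x in atTop, L.Holds (update w i x) := by
  simp_rw [holds_update_iff_of_neg h]
  exact (eventually_gt_atTop _).mono fun _ => ltOrLe_of_lt

lemma eventually_atBot_holds_update (h : 0 < L.coeff i) :
    ∀ᶠ x in atBot, L.Holds (update w i x) := by
  simp_rw [holds_update_iff_of_pos h]
  exact (eventually_lt_atBot _).mono fun _ => ltOrLe_of_lt

/-- The Fourier–Motzkin combination of a lower bound `L` and an upper bound `M` on the
`i`-th variable: both are normalised to coefficient `∓1` there and added. -/
noncomputable def elimPair (i : ℕ) (L M : LinIneq) : LinIneq where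
  coeff := (-L.coeff i)⁻¹ • L.coeff + (M.coeff i)⁻¹ • M.coeff
  bound := (-L.coeff i)⁻¹ * L.bound + (M.coeff i)⁻¹ * M.bound
  strict := L.strict || M.strict

lemma holds_elimPair_iff (hL : L.coeff i < 0) (hM : 0 < M.coeff i) :
    (L.elimPair i M).Holds w ↔ ∃ x, L.Holds (update w i x) ∧ M.Holds (update w i x) := by
  simp_rw [holds_update_iff_of_neg hL, holds_update_iff_of_pos hM, exists_ltOrLe_ltOrLe_iff]
  have hi : (L.elimPair i M).coeff i = 0 := by
    simp [elimPair, hL.ne, hM.ne']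
  rw [← holds_update_iff_of_coeff_eq_zero hi (x := 0), Holds]
  refine ltOrLe_iff_of_sub_eq_mul one_pos ?_
  simp only [elimPair, map_add, map_smul, smul_eq_mul, root]
  field_simp
  ring

lemma exists_holds_update_of_elimPair (hL : L.coeff i ≠ 0) (hM : M.coeff i ≠ 0)
    (hLM : L.coeff i < 0 → 0 < M.coeff i → (L.elimPair i M).Holds w)
    (hML : M.coeff i < 0 → 0 < L.coeff i → (M.elimPair i L).Holds w) :
    ∃ x, L.Holds (update w i x) ∧ M.Holds (update w i x) := by
  rcases hL.lt_or_gt with hl | hl <;> rcases hM.lt_or_gt with hm | hm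
  · exact ((eventually_atTop_holds_update hl).and (eventually_atTop_holds_update hm)).exists
  · exact (holds_elimPair_iff hl hm).1 (hLM hl hm)
  · obtain ⟨x, hxM, hxL⟩ := (holds_elimPair_iff hm hl).1 (hML hm hl)
    exact ⟨x, hxL, hxM⟩
  · exact ((eventually_atBot_holds_update hl).and (eventually_atBot_holds_update hm)).exists

open Classical in
noncomputable def eliminate (i : ℕ) (cl : Finset LinIneq) : Finset LinIneq :=
  cl.filter (fun L => L.coeff i = 0) ∪
    ((cl.filter fun L => L.coeff i < 0) ×ˢ (cl.filter fun M => 0 < M.coeff i)).image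
      fun p => p.1.elimPair i p.2

lemma mem_eliminate {cl : Finset LinIneq} :
    L ∈ eliminate i cl ↔ L ∈ cl ∧ L.coeff i = 0 ∨
      ∃ L₁ ∈ cl, ∃ L₂ ∈ cl, L₁.coeff i < 0 ∧ 0 < L₂.coeff i ∧ L₁.elimPair i L₂ = L := by
  simp only [eliminate, Finset.mem_union, Finset.mem_filter, Finset.mem_image,
    Finset.mem_product, Prod.exists]
  aesop

theorem forall_holds_eliminate_iff (i : ℕ) (cl : Finset LinIneq) (w : ℕ → ℝ) :
    (∀ L ∈ eliminate i cl, L.Holds w) ↔ ∃ x, ∀ L ∈ cl, L.Holds (update w i x) := by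
  constructor
  · intro h
    have hzero : ∀ L ∈ cl, L.coeff i = 0 → L.Holds w := fun L hL h0 =>
      h L (mem_eliminate.2 (.inl ⟨hL, h0⟩))
    have hpair : ∀ L ∈ cl, ∀ M ∈ cl, L.coeff i < 0 → 0 < M.coeff i →
        (L.elimPair i M).Holds w := fun L hL M hM hl hm =>
      h _ (mem_eliminate.2 (.inr ⟨L, hL, M, hM, hl, hm, rfl⟩))
    -- The solution sets in `x` of the inequalities involving `x` are half-lines, so by Helly's
    -- theorem on the line it suffices that any two of them meet.
    obtain ⟨x, hx⟩ := Real.helly_theorem (s := cl.filter fun L => L.coeff i ≠ 0)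
      (F := fun L => {x | L.Holds (update w i x)})
      (fun L hL => convex_setOf_holds_update (Finset.mem_filter.1 hL).2) fun L hL M hM => by
        rw [Finset.mem_filter] at hL hM
        exact exists_holds_update_of_elimPair hL.2 hM.2 (hpair L hL.1 M hM.1) (hpair M hM.1 L hL.1)
    refine ⟨x, fun L hL => ?_⟩
    by_cases h0 : L.coeff i = 0
    · exact (holds_update_iff_of_coeff_eq_zero h0).2 (hzero L hL h0)
    · exact mem_iInter₂.1 hx L (Finset.mem_filter.2 ⟨hL, h0⟩)
  · rintro ⟨x, hx⟩ L hL
    rcases mem_eliminate.1 hL with ⟨hL, h0⟩ | ⟨L₁, hL₁, L₂, hL₂, h₁, h₂, rfl⟩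
    · exact (holds_update_iff_of_coeff_eq_zero h0).1 (hx L hL)
    · exact (holds_elimPair_iff h₁ h₂).2 ⟨x, hx L₁ hL₁, hx L₂ hL₂⟩

end LinIneq

/-- Quantifier-free definability in `⟨ℝ, +, ≤⟩` with real parameters, in disjunctive normal
form. -/
def IsSemilinear (s : Set (ℕ → ℝ)) : Prop :=
  ∃ D : Finset (Finset LinIneq), s = ⋃ cl ∈ D, ⋂ L ∈ cl, {v | L.Holds v}

namespace IsSemilinear

variable {s t : Set (ℕ → ℝ)}

lemma biInter_holds (cl : Finset LinIneq) : IsSemilinear (⋂ L ∈ cl, {v | L.Holds v}) :=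
  ⟨{cl}, by simp⟩

lemma setOf_holds (L : LinIneq) : IsSemilinear {v | L.Holds v} := by
  simpa using biInter_holds {L}

lemma univ : IsSemilinear Set.univ := by
  simpa using biInter_holds ∅

lemma union (hs : IsSemilinear s) (ht : IsSemilinear t) : IsSemilinear (s ∪ t) := by
  classical
  obtain ⟨D, rfl⟩ := hs
  obtain ⟨D', rfl⟩ := ht
  exact ⟨D ∪ D', (Finset.set_biUnion_union _ _ _).symm⟩

lemma biUnion {ι : Type*} (I : Finset ι) {s : ι → Set (ℕ → ℝ)}
    (h : ∀ i ∈ I, IsSemilinear (s i)) : IsSemilinear (⋃ i ∈ I, s i) := by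
  classical
  induction I using Finset.induction_on with
  | empty => exact ⟨∅, by simp⟩
  | insert i I _ ih =>
    rw [Finset.set_biUnion_insert]
    exact (h i (by simp)).union (ih fun j hj => h j (by simp [hj]))

lemma inter (hs : IsSemilinear s) (ht : IsSemilinear t) : IsSemilinear (s ∩ t) := by
  classical
  obtain ⟨D, rfl⟩ := hs
  obtain ⟨D', rfl⟩ := ht
  have : (⋃ cl ∈ D, ⋂ L ∈ cl, {v | L.Holds v}) ∩ (⋃ cl' ∈ D', ⋂ L ∈ cl', {v | L.Holds v}) =
      ⋃ cl ∈ D, ⋃ cl' ∈ D', ⋂ L ∈ cl ∪ cl', {v | L.Holds v} := by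
    ext v
    simp only [mem_inter_iff, mem_iUnion, mem_iInter, mem_ofPred_eq, Finset.mem_union, exists_prop]
    constructor
    · rintro ⟨⟨cl, hcl, h⟩, ⟨cl', hcl', h'⟩⟩
      exact ⟨cl, hcl, cl', hcl', fun L hL => hL.elim (h L) (h' L)⟩
    · rintro ⟨cl, hcl, cl', hcl', h⟩
      exact ⟨⟨cl, hcl, fun L hL => h L (.inl hL)⟩, ⟨cl', hcl', fun L hL => h L (.inr hL)⟩⟩
  rw [this]
  exact biUnion D fun cl _ => biUnion D' fun cl' _ => biInter_holds _

lemma biInter {ι : Type*} (I : Finset ι) {s : ι → Set (ℕ → ℝ)}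
    (h : ∀ i ∈ I, IsSemilinear (s i)) : IsSemilinear (⋂ i ∈ I, s i) := by
  classical
  induction I using Finset.induction_on with
  | empty => simpa using univ
  | insert i I _ ih =>
    rw [Finset.set_biInter_insert]
    exact (h i (by simp)).inter (ih fun j hj => h j (by simp [hj]))

lemma compl (hs : IsSemilinear s) : IsSemilinear sᶜ := by
  obtain ⟨D, rfl⟩ := hs
  have : (⋃ cl ∈ D, ⋂ L ∈ cl, {v | L.Holds v})ᶜ = ⋂ cl ∈ D, ⋃ L ∈ cl, {v | L.neg.Holds v} := by
    simp only [compl_iUnion, compl_iInter, LinIneq.holds_neg]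
    rfl
  rw [this]
  exact biInter D fun cl _ => biUnion cl fun L _ => setOf_holds _

lemma exists_update (hs : IsSemilinear s) (i : ℕ) :
    IsSemilinear {v | ∃ x, update v i x ∈ s} := by
  obtain ⟨D, rfl⟩ := hs
  have : {v | ∃ x, update v i x ∈ ⋃ cl ∈ D, ⋂ L ∈ cl, {v | L.Holds v}} =
      ⋃ cl ∈ D, ⋂ L ∈ LinIneq.eliminate i cl, {v | L.Holds v} := by
    ext v
    simp only [mem_ofPred_eq, mem_iUnion, mem_iInter, LinIneq.forall_holds_eliminate_iff,
      exists_prop]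
    exact exists_comm.trans (exists_congr fun _ => exists_and_left)
  rw [this]
  exact biUnion D fun cl _ => biInter_holds _

lemma setOf_linearCombination_le (c : ℕ →₀ ℝ) (q : ℝ) :
    IsSemilinear {v | linearCombination ℝ v c ≤ q} :=
  setOf_holds ⟨c, q, false⟩

lemma setOf_linearCombination_lt (c : ℕ →₀ ℝ) (q : ℝ) :
    IsSemilinear {v | linearCombination ℝ v c < q} :=
  setOf_holds ⟨c, q, true⟩

lemma setOf_linearCombination_eq (c : ℕ →₀ ℝ) (q : ℝ) :
    IsSemilinear {v | linearCombination ℝ v c = q} := by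
  have : {v | linearCombination ℝ v c = q} =
      {v | linearCombination ℝ v c ≤ q} ∩ {v | linearCombination ℝ v (-c) ≤ -q} := by
    ext v
    simp [le_antisymm_iff]
  rw [this]
  exact (setOf_linearCombination_le _ _).inter (setOf_linearCombination_le _ _)

lemma setOf_mem_Ico (i : ℕ) : IsSemilinear {u | u i ∈ Ico 0 1} := by
  have h₀ := setOf_linearCombination_le (-single i 1) 0
  have h₁ := setOf_linearCombination_lt (single i 1) 1
  simp only [map_neg, Finsupp.linearCombination_single, one_smul, neg_nonpos] at h₀ h₁
  simpa only [mem_Ico, ofPred_and] using h₀.inter h₁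

end IsSemilinear

lemma add_eq_iff_floor_fract {a b c : ℝ} :
    a + b = c ↔ (⌊a⌋ + ⌊b⌋ = ⌊c⌋ ∧ Int.fract a + Int.fract b - Int.fract c = 0) ∨
      (⌊a⌋ + ⌊b⌋ + 1 = ⌊c⌋ ∧ Int.fract a + Int.fract b - Int.fract c = 1) := by
  have ha := Int.floor_add_fract a
  have hb := Int.floor_add_fract b
  have hc := Int.floor_add_fract c
  constructor
  · intro h
    have hd : ((⌊c⌋ - ⌊a⌋ - ⌊b⌋ : ℤ) : ℝ) = Int.fract a + Int.fract b - Int.fract c := by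
      push_cast
      linarith
    have hlo : (-1 : ℝ) < ((⌊c⌋ - ⌊a⌋ - ⌊b⌋ : ℤ) : ℝ) := by
      rw [hd]
      linarith [Int.fract_nonneg a, Int.fract_nonneg b, Int.fract_lt_one c]
    have hhi : ((⌊c⌋ - ⌊a⌋ - ⌊b⌋ : ℤ) : ℝ) < 2 := by
      rw [hd]
      linarith [Int.fract_lt_one a, Int.fract_lt_one b, Int.fract_nonneg c]
    replace hlo : -1 < ⌊c⌋ - ⌊a⌋ - ⌊b⌋ := by exact_mod_cast hlo
    replace hhi : ⌊c⌋ - ⌊a⌋ - ⌊b⌋ < 2 := by exact_mod_cast hhi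
    obtain h0 | h1 : ⌊c⌋ - ⌊a⌋ - ⌊b⌋ = 0 ∨ ⌊c⌋ - ⌊a⌋ - ⌊b⌋ = 1 := by omega
    · exact .inl ⟨by omega, by rw [← hd, h0, Int.cast_zero]⟩
    · exact .inr ⟨by omega, by rw [← hd, h1, Int.cast_one]⟩
  · rintro (⟨hz, hf⟩ | ⟨hz, hf⟩) <;> have hz' := congrArg (Int.cast : ℤ → ℝ) hz <;>
      push_cast at hz' <;> linarith

lemma le_iff_floor_fract {a b : ℝ} :
    a ≤ b ↔ ⌊a⌋ < ⌊b⌋ ∨ (⌊a⌋ = ⌊b⌋ ∧ Int.fract a ≤ Int.fract b) := by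
  constructor
  · intro h
    refine (Int.floor_le_floor h).lt_or_eq.imp id fun heq => ⟨heq, ?_⟩
    rw [Int.fract, Int.fract, heq]
    linarith
  · rintro (hlt | ⟨heq, hf⟩)
    · exact (Int.floor_lt.1 hlt).le.trans (Int.floor_le b)
    · rw [Int.fract, Int.fract, heq] at hf
      linarith

def floorFractSet (Z : Set (ℕ → ℤ)) (P : Set (ℕ → ℝ)) : Set (ℕ → ℝ) :=
  {v | Int.floor ∘ v ∈ Z ∧ Int.fract ∘ v ∈ P}

lemma floorFractSet_inter_floorFractSet (Z Z' : Set (ℕ → ℤ)) (P P' : Set (ℕ → ℝ)) :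
    floorFractSet Z P ∩ floorFractSet Z' P' = floorFractSet (Z ∩ Z') (P ∩ P') := by
  ext v
  simp only [floorFractSet, mem_inter_iff, mem_ofPred_eq]
  tauto

lemma compl_floorFractSet (Z : Set (ℕ → ℤ)) (P : Set (ℕ → ℝ)) :
    (floorFractSet Z P)ᶜ = floorFractSet Zᶜ univ ∪ floorFractSet univ Pᶜ := by
  ext v
  simp only [floorFractSet, mem_compl_iff, mem_union, mem_ofPred_eq, mem_univ]
  tauto

lemma setOf_exists_update_mem_floorFractSet (Z : Set (ℕ → ℤ)) (P : Set (ℕ → ℝ)) (i : ℕ) :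
    {v | ∃ x, update v i x ∈ floorFractSet Z P} =
      floorFractSet {z | ∃ k : ℤ, update z i k ∈ Z}
        {u | ∃ y, update u i y ∈ P ∩ {u | u i ∈ Ico 0 1}} := by
  ext v
  simp only [floorFractSet, mem_ofPred_eq, mem_inter_iff, comp_update, update_self, mem_Ico]
  constructor
  · rintro ⟨x, hZ, hP⟩
    exact ⟨⟨⌊x⌋, hZ⟩, Int.fract x, hP, Int.fract_nonneg x, Int.fract_lt_one x⟩
  · rintro ⟨⟨k, hZ⟩, y, hP, hy₀, hy₁⟩
    refine ⟨k + y, ?_, ?_⟩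
    · rwa [Int.floor_intCast_add, Int.floor_eq_zero_iff.2 ⟨hy₀, hy₁⟩, add_zero]
    · rwa [Int.fract_intCast_add, Int.fract_eq_self.2 ⟨hy₀, hy₁⟩]

inductive IsFloorFractUnion : Set (ℕ → ℝ) → Prop
  | of_isSemilinear (Z : Set (ℕ → ℤ)) {P : Set (ℕ → ℝ)} (hP : IsSemilinear P) :
      IsFloorFractUnion (floorFractSet Z P)
  | union {s t : Set (ℕ → ℝ)} :
      IsFloorFractUnion s → IsFloorFractUnion t → IsFloorFractUnion (s ∪ t)

namespace IsFloorFractUnion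

variable {s t : Set (ℕ → ℝ)}

lemma inter (hs : IsFloorFractUnion s) (ht : IsFloorFractUnion t) : IsFloorFractUnion (s ∩ t) := by
  induction hs generalizing t with
  | of_isSemilinear Z hP =>
    induction ht with
    | of_isSemilinear Z' hP' =>
      rw [floorFractSet_inter_floorFractSet]
      exact .of_isSemilinear _ (hP.inter hP')
    | union _ _ ih ih' =>
      rw [inter_union_distrib_left]
      exact ih.union ih'
  | union _ _ ih ih' =>
    rw [union_inter_distrib_right]
    exact (ih ht).union (ih' ht)

lemma compl (hs : IsFloorFractUnion s) : IsFloorFractUnion sᶜ := by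
  induction hs with
  | of_isSemilinear Z hP =>
    rw [compl_floorFractSet]
    exact .union (.of_isSemilinear _ IsSemilinear.univ) (.of_isSemilinear _ hP.compl)
  | union _ _ ih ih' =>
    rw [compl_union]
    exact ih.inter ih'

lemma exists_update (hs : IsFloorFractUnion s) (i : ℕ) :
    IsFloorFractUnion {v | ∃ x, update v i x ∈ s} := by
  induction hs with
  | of_isSemilinear Z hP =>
    rw [setOf_exists_update_mem_floorFractSet]
    exact .of_isSemilinear _ ((hP.inter (IsSemilinear.setOf_mem_Ico i)).exists_update i)
  | union _ _ ih ih' =>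
    simp only [mem_union, exists_or, ofPred_or]
    exact ih.union ih'

lemma setOf_add_eq (i j k : ℕ) : IsFloorFractUnion {v | v i + v j = v k} := by
  have h : {v : ℕ → ℝ | v i + v j = v k} =
      floorFractSet {z | z i + z j = z k} {u | u i + u j - u k = 0} ∪
        floorFractSet {z | z i + z j + 1 = z k} {u | u i + u j - u k = 1} := by
    ext v
    simp only [floorFractSet, mem_ofPred_eq, mem_union, comp_apply, add_eq_iff_floor_fract]
  have hP (q : ℝ) : IsSemilinear {u : ℕ → ℝ | u i + u j - u k = q} := by
    have := IsSemilinear.setOf_linearCombination_eq (single i 1 + single j 1 - single k 1) q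
    simpa using this
  rw [h]
  exact .union (.of_isSemilinear _ (hP 0)) (.of_isSemilinear _ (hP 1))

lemma setOf_le (i j : ℕ) : IsFloorFractUnion {v | v i ≤ v j} := by
  have h : {v : ℕ → ℝ | v i ≤ v j} =
      floorFractSet {z | z i < z j} univ ∪ floorFractSet {z | z i = z j} {u | u i ≤ u j} := by
    ext v
    rw [mem_ofPred_eq, le_iff_floor_fract]
    simp only [floorFractSet, mem_ofPred_eq, mem_union, mem_univ, and_true, comp_apply]
  have hP := IsSemilinear.setOf_linearCombination_le (single i 1 - single j 1) 0
  simp only [map_sub, Finsupp.linearCombination_single, one_smul, sub_nonpos] at hP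
  rw [h]
  exact .union (.of_isSemilinear _ IsSemilinear.univ) (.of_isSemilinear _ hP)

lemma setOf_exists_intCast_eq (i : ℕ) : IsFloorFractUnion {v | ∃ z : ℤ, v i = z} := by
  have h : {v : ℕ → ℝ | ∃ z : ℤ, v i = z} = floorFractSet univ {u | u i = 0} := by
    ext v
    simp [floorFractSet, Int.fract_eq_zero_iff, eq_comm]
  rw [h]
  exact .of_isSemilinear _ (by simpa using IsSemilinear.setOf_linearCombination_eq (single i 1) 0)

end IsFloorFractUnion

theorem LinFml.isFloorFractUnion_setOf_sat (φ : LinFml) : IsFloorFractUnion {v | φ.Sat v} := by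
  induction φ with
  | add i j k => exact .setOf_add_eq i j k
  | le i j => exact .setOf_le i j
  | int i => exact .setOf_exists_intCast_eq i
  | not φ ih => exact ih.compl
  | and φ ψ ih ih' => exact ih.inter ih'
  | ex i φ ih => exact ih.exists_update i

section Fsigma

variable {X : Type*} [TopologicalSpace X] {s t : Set X}

theorem isFsigma_iff_isGδ_compl : IsFsigma s ↔ IsGδ sᶜ := by
  rw [isGδ_iff_eq_iInter_nat]
  constructor
  · rintro ⟨C, hC, rfl⟩
    exact ⟨fun i => (C i)ᶜ, fun i => (hC i).isOpen_compl, compl_iUnion C⟩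
  · rintro ⟨U, hU, h⟩
    refine ⟨fun i => (U i)ᶜ, fun i => (hU i).isClosed_compl, ?_⟩
    rw [← compl_iInter, ← h, compl_compl]

theorem isGδ_iff_isFsigma_compl : IsGδ s ↔ IsFsigma sᶜ := by
  rw [isFsigma_iff_isGδ_compl, compl_compl]

theorem IsClosed.isFsigma (hs : IsClosed s) : IsFsigma s :=
  ⟨fun _ => s, fun _ => hs, (iUnion_const s).symm⟩

theorem IsOpen.isFsigma [PerfectlyNormalSpace X] (hs : IsOpen s) : IsFsigma s :=
  isFsigma_iff_isGδ_compl.2 hs.isClosed_compl.isGδ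

theorem IsFsigma.union (hs : IsFsigma s) (ht : IsFsigma t) : IsFsigma (s ∪ t) := by
  rw [isFsigma_iff_isGδ_compl, compl_union] at *
  exact hs.inter ht

theorem IsFsigma.biUnion {ι : Type*} {I : Set ι} (hI : I.Countable) {f : ι → Set X}
    (h : ∀ i ∈ I, IsFsigma (f i)) : IsFsigma (⋃ i ∈ I, f i) := by
  rw [isFsigma_iff_isGδ_compl, compl_iUnion₂]
  exact .biInter hI fun i hi => isFsigma_iff_isGδ_compl.1 (h i hi)

theorem IsFsigma.biInter {ι : Type*} {I : Set ι} (hI : I.Finite) {f : ι → Set X}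
    (h : ∀ i ∈ I, IsFsigma (f i)) : IsFsigma (⋂ i ∈ I, f i) := by
  rw [isFsigma_iff_isGδ_compl, compl_iInter₂]
  exact .biUnion hI fun i hi => isFsigma_iff_isGδ_compl.1 (h i hi)

variable [PerfectlyNormalSpace X] {g : X → ℕ → ℝ}

lemma LinIneq.isFsigma_preimage (hg : Continuous g) (L : LinIneq) :
    IsFsigma (g ⁻¹' {v | L.Holds v}) := by
  have hc : Continuous fun x => linearCombination ℝ (g x) L.coeff := by
    simp only [Finsupp.linearCombination_apply, Finsupp.sum]
    fun_prop
  rcases L with ⟨c, q, _ | _⟩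
  · exact (isClosed_le hc continuous_const).isFsigma
  · exact (isOpen_lt hc continuous_const).isFsigma

lemma IsSemilinear.isFsigma_preimage {P : Set (ℕ → ℝ)} (hP : IsSemilinear P)
    (hg : Continuous g) : IsFsigma (g ⁻¹' P) := by
  obtain ⟨D, rfl⟩ := hP
  simp only [preimage_iUnion₂, preimage_iInter₂]
  exact .biUnion D.finite_toSet.countable fun cl _ =>
    .biInter cl.finite_toSet fun L _ => L.isFsigma_preimage hg

end Fsigma

section ExtendByZero

variable {n : ℕ}

def extendByZero {M : Type*} [Zero M] (x : Fin n → M) : ℕ → M :=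
  fun i => if h : i < n then x ⟨i, h⟩ else 0

lemma comp_extendByZero {M N : Type*} [Zero M] [Zero N] {f : M → N} (hf : f 0 = 0)
    (x : Fin n → M) : f ∘ extendByZero x = extendByZero (f ∘ x) := by
  ext i
  simp only [comp_apply, extendByZero]
  split_ifs <;> simp [hf]

lemma continuous_extendByZero {M : Type*} [Zero M] [TopologicalSpace M] :
    Continuous (extendByZero : (Fin n → M) → ℕ → M) :=
  continuous_pi fun i => by
    unfold extendByZero
    split_ifs
    exacts [continuous_apply _, continuous_const]

lemma forall_lt_extendByZero_mem_iff {M : Type*} [Zero M] {s : Set M} (x : Fin n → M) :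
    (∀ i < n, extendByZero x i ∈ s) ↔ ∀ i, x i ∈ s := by
  refine ⟨fun h i => by simpa [extendByZero] using h i i.2, fun h i hi => ?_⟩
  simpa only [extendByZero, dif_pos hi] using h ⟨i, hi⟩

lemma floor_comp_eq_iff {ι : Type*} (x : ι → ℝ) (z : ι → ℤ) :
    Int.floor ∘ x = z ↔ ∀ i, x i - z i ∈ Ico 0 1 := by
  simp only [funext_iff, comp_apply, Int.floor_eq_iff, mem_Ico, sub_nonneg, sub_lt_iff_lt_add']

lemma preimage_extendByZero_floorFractSet (Z : Set (ℕ → ℤ)) (P : Set (ℕ → ℝ)) :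
    extendByZero ⁻¹' floorFractSet Z P =
      ⋃ z ∈ {z : Fin n → ℤ | extendByZero z ∈ Z},
        (fun x => extendByZero (x - Int.cast ∘ z)) ⁻¹' ({u | ∀ i < n, u i ∈ Ico 0 1} ∩ P) := by
  ext x
  simp only [floorFractSet, mem_preimage, mem_ofPred_eq, mem_iUnion, mem_inter_iff, exists_prop,
    comp_extendByZero Int.floor_zero, comp_extendByZero Int.fract_zero,
    forall_lt_extendByZero_mem_iff, Pi.sub_apply, comp_apply]
  have hfract : x - Int.cast ∘ (Int.floor ∘ x) = Int.fract ∘ x :=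
    funext fun i => Int.self_sub_floor (x i)
  constructor
  · rintro ⟨hZ, hP⟩
    exact ⟨Int.floor ∘ x, hZ, (floor_comp_eq_iff x _).1 rfl, by rwa [hfract]⟩
  · rintro ⟨z, hZ, hbox, hP⟩
    obtain rfl : Int.floor ∘ x = z := (floor_comp_eq_iff x z).2 hbox
    exact ⟨hZ, by rwa [← hfract]⟩

end ExtendByZero

lemma IsFloorFractUnion.isFsigma_preimage_extendByZero {n : ℕ} {A : Set (ℕ → ℝ)}
    (hA : IsFloorFractUnion A) : IsFsigma (extendByZero ⁻¹' A : Set (Fin n → ℝ)) := by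
  induction hA with
  | of_isSemilinear Z hP =>
    rw [preimage_extendByZero_floorFractSet]
    have hbox : {u : ℕ → ℝ | ∀ i < n, u i ∈ Ico 0 1} =
        ⋂ i ∈ Finset.range n, {u | u i ∈ Ico 0 1} := by
      ext u
      simp
    rw [hbox]
    exact .biUnion (to_countable _) fun z _ =>
      ((IsSemilinear.biInter _ fun i _ => .setOf_mem_Ico i).inter hP).isFsigma_preimage
      (continuous_extendByZero.comp (continuous_id.sub continuous_const))
  | union _ _ hs ht => exact hs.union ht

theorem definable_isFsigma_and_isGdelta_general {n : ℕ}
    (S : Set (Fin n → ℝ)) (hS : LinDefinable S) :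
    IsFsigma S ∧ IsGδ S := by
  obtain ⟨φ, rfl⟩ := hS
  have hφ := φ.isFloorFractUnion_setOf_sat
  exact ⟨hφ.isFsigma_preimage_extendByZero,
    isGδ_iff_isFsigma_compl.2 hφ.compl.isFsigma_preimage_extendByZero⟩

/-- Every set `S ⊆ ℝⁿ` definable in the first-order theory ⟨ℝ, ℤ, +, ≤⟩
belongs to the class `F_σ ∩ G_δ` of the natural (Euclidean) topology on ℝⁿ. -/
theorem definable_isFsigma_and_isGdelta {n : ℕ} (hn : 0 < n)
    (S : Set (Fin n → ℝ)) (hS : LinDefinable S) :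
    IsFsigma S ∧ IsGδ S :=
  definable_isFsigma_and_isGdelta_general S hS
end

section
/- The breakpoint (Miyano–Hayashi) construction is correct: given a nondeterministic co-Büchi automaton A = (Q, Σ, δ, q₀, F), the deterministic co-Büchi automaton A' with states 2^Q × 2^Q, initial state ({q₀}, ∅), transition δ'((S,R),a) = (T, T \ F) if R = ∅ and (T, U \ F) otherwise, where T = δ(S,a) and U = δ(R,a), and accepting set 2^Q × {∅}, accepts exactly the same ω-language as A. -/
structure NCA (A Q : Type*) where
  delta : Q → A → Set Q
  init : Q
  acc : Set Q

def NCA.IsRun {A Q : Type*} (M : NCA A Q) (w : ℕ → A) (π : ℕ → Q) : Prop :=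
  π 0 = M.init ∧ ∀ i, π (i + 1) ∈ M.delta (π i) (w i)

noncomputable def bpStep {A Q : Type*} (M : NCA A Q)
    (p : Set Q × Set Q) (a : A) : Set Q × Set Q :=
  letI := Classical.propDecidable (p.2 = ∅)
  let T : Set Q := {q | ∃ s ∈ p.1, q ∈ M.delta s a}
  if p.2 = ∅ then (T, T \ M.acc)
  else (T, {q | ∃ s ∈ p.2, q ∈ M.delta s a} \ M.acc)

noncomputable def bpRun {A Q : Type*} (M : NCA A Q) (w : ℕ → A) :
    ℕ → Set Q × Set Q
  | 0 => ({M.init}, ∅)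
  | n + 1 => bpStep M (bpRun M w n) (w n)

namespace BreakpointAux

variable {A Q : Type*} (M : NCA A Q) (w : ℕ → A)

lemma fst_succ (n : ℕ) :
    (bpRun M w (n+1)).1 = {q | ∃ s ∈ (bpRun M w n).1, q ∈ M.delta s (w n)} := by
  show (bpStep M _ _).1 = _
  by_cases h : (bpRun M w n).2 = ∅ <;> simp [bpStep, h]

lemma snd_succ_empty {n : ℕ} (h : (bpRun M w n).2 = ∅) :
    (bpRun M w (n+1)).2 =
      {q | ∃ s ∈ (bpRun M w n).1, q ∈ M.delta s (w n)} \ M.acc := by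
  show (bpStep M _ _).2 = _
  simp [bpStep, h]

lemma snd_succ_nonempty {n : ℕ} (h : (bpRun M w n).2 ≠ ∅) :
    (bpRun M w (n+1)).2 =
      {q | ∃ s ∈ (bpRun M w n).2, q ∈ M.delta s (w n)} \ M.acc := by
  show (bpStep M _ _).2 = _
  simp [bpStep, h]

lemma notin_acc {n : ℕ} {q : Q} (h : q ∈ (bpRun M w (n+1)).2) : q ∉ M.acc := by
  rcases eq_or_ne (bpRun M w n).2 ∅ with he | he
  · rw [snd_succ_empty M w he] at h; exact h.2
  · rw [snd_succ_nonempty M w he] at h; exact h.2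

lemma snd_subset_fst : ∀ n, (bpRun M w n).2 ⊆ (bpRun M w n).1 := by
  intro n
  induction n with
  | zero => simp [bpRun]
  | succ n ih =>
    rcases eq_or_ne (bpRun M w n).2 ∅ with he | he
    · rw [snd_succ_empty M w he, fst_succ]; exact Set.diff_subset
    · rw [snd_succ_nonempty M w he, fst_succ]
      rintro q ⟨⟨s, hs, hd⟩, -⟩
      exact ⟨s, ih hs, hd⟩

lemma run_mem_fst {π : ℕ → Q} (h : M.IsRun w π) : ∀ n, π n ∈ (bpRun M w n).1 := by
  intro n
  induction n with
  | zero => simp [bpRun, h.1]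
  | succ n ih => rw [fst_succ]; exact ⟨π n, ih, h.2 n⟩

lemma mem_fst_prefix : ∀ n, ∀ q ∈ (bpRun M w n).1, ∃ p : ℕ → Q,
    p 0 = M.init ∧ (∀ i, i < n → p (i+1) ∈ M.delta (p i) (w i)) ∧ p n = q := by
  intro n
  induction n with
  | zero =>
    intro q hq
    simp only [bpRun, Set.mem_singleton_iff] at hq
    exact ⟨fun _ => M.init, rfl, fun i hi => absurd hi (by omega), hq.symm⟩
  | succ n ih =>
    intro q hq
    rw [fst_succ] at hq
    obtain ⟨s, hs, hd⟩ := hq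
    obtain ⟨p, hp0, hpt, hpn⟩ := ih s hs
    refine ⟨fun i => if i ≤ n then p i else q, by simp [hp0], ?_, by simp⟩
    intro i hi
    by_cases h1 : i < n
    · simp only [if_pos (by omega : i ≤ n), if_pos (by omega : i + 1 ≤ n)]
      exact hpt i h1
    · have : i = n := by omega
      subst this
      simp only [if_pos le_rfl, if_neg (by omega : ¬ i + 1 ≤ i), hpn]
      exact hd

/-- Existence of a path from time `t` of length `n` starting at `q`, staying inside
the breakpoint `R`-components. -/
def PathOn (t n : ℕ) (q : Q) : Prop :=
  ∃ p : ℕ → Q, p t = q ∧ (∀ i, t ≤ i → i < t + n → p (i+1) ∈ M.delta (p i) (w i)) ∧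
    (∀ i, t ≤ i → i ≤ t + n → p i ∈ (bpRun M w i).2)

def Alive (t : ℕ) (q : Q) : Prop := ∀ n, PathOn M w t n q

lemma PathOn_mono {t m n : ℕ} {q : Q} (hmn : m ≤ n) (h : PathOn M w t n q) :
    PathOn M w t m q := by
  obtain ⟨p, h1, h2, h3⟩ := h
  exact ⟨p, h1, fun i hi hi' => h2 i hi (by omega), fun i hi hi' => h3 i hi (by omega)⟩

lemma backchain {N : ℕ} (hN : ∀ i, N ≤ i → (bpRun M w i).2 ≠ ∅) :
    ∀ n t, N ≤ t → ∀ q ∈ (bpRun M w (t+n)).2, ∃ p : ℕ → Q,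
      p (t+n) = q ∧ (∀ i, t ≤ i → i < t + n → p (i+1) ∈ M.delta (p i) (w i)) ∧
      (∀ i, t ≤ i → i ≤ t + n → p i ∈ (bpRun M w i).2) := by
  intro n
  induction n with
  | zero =>
    intro t ht q hq
    refine ⟨fun _ => q, rfl, fun i hi hi' => absurd hi' (by omega), fun i hi hi' => ?_⟩
    have : i = t := by omega
    subst this; exact hq
  | succ n ih =>
    intro t ht q hq
    have hne : (bpRun M w (t+n)).2 ≠ ∅ := hN _ (by omega)
    have hq' := hq
    rw [show t + (n+1) = (t+n) + 1 from rfl, snd_succ_nonempty M w hne] at hq'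
    obtain ⟨⟨s, hs, hd⟩, -⟩ := hq'
    obtain ⟨p, hp1, hp2, hp3⟩ := ih t ht s hs
    refine ⟨fun i => if i ≤ t + n then p i else q, by simp [show ¬ t+(n+1) ≤ t+n by omega], ?_, ?_⟩
    · intro i hi hi'
      by_cases h1 : i < t + n
      · simp only [if_pos (by omega : i ≤ t + n), if_pos (by omega : i + 1 ≤ t + n)]
        exact hp2 i hi h1
      · have h2 : i = t + n := by omega
        rw [h2]
        simp only [if_pos le_rfl, if_neg (by omega : ¬ t + n + 1 ≤ t + n), hp1]
        exact hd
    · intro i hi hi'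
      by_cases h1 : i ≤ t + n
      · simp only [if_pos h1]; exact hp3 i hi h1
      · have : i = t + (n+1) := by omega
        subst this
        simp only [if_neg h1]; exact hq

lemma exists_pathOn {N : ℕ} (hN : ∀ i, N ≤ i → (bpRun M w i).2 ≠ ∅)
    {t : ℕ} (ht : N ≤ t) (n : ℕ) : ∃ s, PathOn M w t n s := by
  obtain ⟨q, hq⟩ := Set.nonempty_iff_ne_empty.mpr (hN (t+n) (by omega))
  obtain ⟨p, _, hp2, hp3⟩ := backchain M w hN n t ht q hq
  exact ⟨p t, p, rfl, hp2, hp3⟩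

variable [Finite Q]

lemma exists_alive {N : ℕ} (hN : ∀ i, N ≤ i → (bpRun M w i).2 ≠ ∅)
    {t : ℕ} (ht : N ≤ t) : ∃ q, Alive M w t q := by
  have : Fintype Q := Fintype.ofFinite Q
  by_contra hno
  push_neg at hno
  simp only [Alive, not_forall] at hno
  choose g hg using hno
  obtain ⟨s, hs⟩ := exists_pathOn M w hN ht (Finset.univ.sup g)
  exact hg s (PathOn_mono M w (Finset.le_sup (Finset.mem_univ s)) hs)

omit [Finite Q] in
lemma alive_mem {t : ℕ} {q : Q} (h : Alive M w t q) : q ∈ (bpRun M w t).2 := by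
  obtain ⟨p, hp1, -, hp3⟩ := h 0
  have := hp3 t le_rfl (by omega)
  rwa [hp1] at this

lemma alive_step {t : ℕ} {q : Q} (h : Alive M w t q) :
    ∃ q', q' ∈ M.delta q (w t) ∧ Alive M w (t+1) q' := by
  have : Fintype Q := Fintype.ofFinite Q
  by_contra hno
  push_neg at hno
  have key : ∀ q' : Q, ∃ n, ¬ (q' ∈ M.delta q (w t) ∧ PathOn M w (t+1) n q') := by
    intro q'
    by_cases hq' : q' ∈ M.delta q (w t)
    · have := hno q' hq'
      simp only [Alive, not_forall] at this
      obtain ⟨n, hn⟩ := this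
      exact ⟨n, fun hc => hn hc.2⟩
    · exact ⟨0, fun hc => hq' hc.1⟩
  choose g hg using key
  obtain ⟨p, hp1, hp2, hp3⟩ := h (Finset.univ.sup g + 1)
  set q' := p (t+1) with hq'def
  have hmem : q' ∈ M.delta q (w t) := by
    have := hp2 t le_rfl (by omega)
    rwa [hp1] at this
  have hpath : PathOn M w (t+1) (Finset.univ.sup g) q' :=
    ⟨p, rfl, fun i hi hi' => hp2 i (by omega) (by omega),
      fun i hi hi' => hp3 i (by omega) (by omega)⟩
  exact hg q' ⟨hmem, PathOn_mono M w (Finset.le_sup (Finset.mem_univ q')) hpath⟩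


noncomputable def aliveSeq (N : ℕ) (h0 : {q : Q // Alive M w N q})
    (hstep : ∀ t (q : Q), Alive M w t q →
      ∃ q', q' ∈ M.delta q (w t) ∧ Alive M w (t+1) q') :
    (k : ℕ) → {q : Q // Alive M w (N + k) q}
  | 0 => h0
  | k+1 =>
    ⟨(hstep (N+k) (aliveSeq N h0 hstep k).1 (aliveSeq N h0 hstep k).2).choose,
     (hstep (N+k) (aliveSeq N h0 hstep k).1 (aliveSeq N h0 hstep k).2).choose_spec.2⟩

omit [Finite Q] in
lemma aliveSeq_succ (N : ℕ) (h0 : {q : Q // Alive M w N q})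
    (hstep : ∀ t (q : Q), Alive M w t q →
      ∃ q', q' ∈ M.delta q (w t) ∧ Alive M w (t+1) q') (k t : ℕ) (ht : N + k = t) :
    (aliveSeq M w N h0 hstep (k+1)).1 ∈
      M.delta (aliveSeq M w N h0 hstep k).1 (w t) := by
  subst ht
  simp only [aliveSeq]
  exact (hstep (N+k) (aliveSeq M w N h0 hstep k).1
    (aliveSeq M w N h0 hstep k).2).choose_spec.1

end BreakpointAux

open BreakpointAux in
/-- Correctness of the breakpoint construction: a word is accepted by the
nondeterministic co-Büchi automaton `A` (some run visits `F` only finitely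
often) if and only if it is accepted by the deterministic breakpoint
automaton `A'` (its unique run visits the accepting set
`F' = 2^Q × {∅}` only finitely often). -/
theorem breakpoint_correct {A Q : Type*} [Finite Q] (M : NCA A Q) :
    {w : ℕ → A | ∃ π, M.IsRun w π ∧ {n | π n ∈ M.acc}.Finite} =
      {w : ℕ → A | {n | (bpRun M w n).2 = ∅}.Finite} := by
  ext w
  simp only [Set.mem_setOf_eq]
  constructor
  · rintro ⟨π, hrun, hfin⟩
    by_contra hinf0
    have hinf : {n | (bpRun M w n).2 = ∅}.Infinite := hinf0
    obtain ⟨B, hB⟩ := hfin.bddAbove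
    have hgt : ∀ b : ℕ, ∃ m, (bpRun M w m).2 = ∅ ∧ b < m := by
      intro b
      by_contra h
      push_neg at h
      exact hinf (Set.Finite.subset (Set.finite_Iic b) (fun n hn => h n hn))
    obtain ⟨m, hm, hBm⟩ := hgt B
    have hnacc : ∀ n, B < n → π n ∉ M.acc := by
      intro n hn hacc
      have := hB (show n ∈ {n | π n ∈ M.acc} from hacc)
      omega
    have key : ∀ k, π (m+1+k) ∈ (bpRun M w (m+1+k)).2 := by
      intro k
      induction k with
      | zero =>
        have hSm := run_mem_fst M w hrun (m+1)
        rw [fst_succ] at hSm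
        rw [show m+1+0 = m+1 from rfl, snd_succ_empty M w hm]
        exact ⟨hSm, hnacc (m+1) (by omega)⟩
      | succ k ih =>
        have hne : (bpRun M w (m+1+k)).2 ≠ ∅ := by
          intro he; rw [he] at ih; exact ih
        rw [show m+1+(k+1) = (m+1+k)+1 from rfl, snd_succ_nonempty M w hne]
        exact ⟨⟨π (m+1+k), ih, hrun.2 (m+1+k)⟩, hnacc _ (by omega)⟩
    obtain ⟨m', hm', hgt'⟩ := hgt m
    have h2 := key (m' - m - 1)
    rw [show m + 1 + (m' - m - 1) = m' by omega, hm'] at h2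
    exact h2
  · intro hfin
    obtain ⟨B, hB⟩ := hfin.bddAbove
    set N := B + 1 with hNdef
    have hN : ∀ i, N ≤ i → (bpRun M w i).2 ≠ ∅ := by
      intro i hi he
      have := hB (show i ∈ {n | (bpRun M w n).2 = ∅} from he)
      omega
    obtain ⟨q0, hq0⟩ := exists_alive M w hN (le_refl N)
    have hstep : ∀ t (q : Q), Alive M w t q →
        ∃ q', q' ∈ M.delta q (w t) ∧ Alive M w (t+1) q' :=
      fun t q h => alive_step M w h
    set f := aliveSeq M w N ⟨q0, hq0⟩ hstep with hfdef
    have hf0 : (f 0).1 = q0 := by simp only [hfdef, aliveSeq]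
    have hq0S : q0 ∈ (bpRun M w N).1 := snd_subset_fst M w N (alive_mem M w hq0)
    obtain ⟨p, hp0, hptrans, hpN⟩ := mem_fst_prefix M w N q0 hq0S
    refine ⟨fun n => if n < N then p n else (f (n - N)).1, ⟨?_, ?_⟩, ?_⟩
    · show (if 0 < N then p 0 else _) = M.init
      rw [if_pos (by omega)]; exact hp0
    · intro i
      by_cases h1 : i + 1 < N
      · simp only [if_pos (by omega : i < N), if_pos h1]
        exact hptrans i (by omega)
      · by_cases h2 : i < N
        · have hiN : i + 1 = N := by omega
          simp only [if_pos h2, if_neg h1]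
          rw [show i + 1 - N = 0 by omega, hf0]
          have := hptrans i (by omega)
          rwa [hiN, hpN] at this
        · simp only [if_neg h2, if_neg h1]
          rw [show i + 1 - N = (i - N) + 1 by omega]
          exact aliveSeq_succ M w N ⟨q0, hq0⟩ hstep (i - N) i (by omega)
    · apply Set.Finite.subset (Set.finite_Iio N)
      intro n hn
      simp only [Set.mem_setOf_eq] at hn
      simp only [Set.mem_Iio]
      by_contra h'
      push_neg at h'
      rw [if_neg (by omega)] at hn
      set x := (f (n - N)).1 with hxdef
      have hx : Alive M w (N + (n - N)) x := (f (n - N)).2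
      have hmem := alive_mem M w hx
      rw [show N + (n - N) = n by omega] at hmem
      obtain ⟨n', rfl⟩ : ∃ n', n = n' + 1 := ⟨n - 1, by omega⟩
      exact notin_acc M w hmem hn
end

section
/- An inherently weak Büchi automaton can be converted into an equivalent weak Büchi automaton accepting the same ω-language: take the partition into strongly connected components, make all states of a component accepting iff the component contains an accepting cycle, and order components by reachability; the resulting weak automaton accepts the same language. -/
/-- A (nondeterministic) Büchi automaton on infinite words. -/
structure NBA (A Q : Type*) where
  delta : Q → A → Set Q
  init : Q
  acc : Set Q

/-- A run of the automaton on an infinite word. -/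
def NBA.IsRun {A Q : Type*} (M : NBA A Q) (w : ℕ → A) (π : ℕ → Q) : Prop :=
  π 0 = M.init ∧ ∀ i, π (i + 1) ∈ M.delta (π i) (w i)

/-- The ω-language accepted with the Büchi condition. -/
def NBA.Lang {A Q : Type*} (M : NBA A Q) : Set (ℕ → A) :=
  {w | ∃ π, M.IsRun w π ∧ {n | π n ∈ M.acc}.Infinite}

/-- A finite path labelled by `u` from `q` to `q'` whose intermediate states
all lie in `S`. -/
def NBA.StepsIn {A Q : Type*} (M : NBA A Q) (S : Set Q) :
    Q → List A → Q → Prop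
  | q, [], q' => q = q'
  | q, a :: u, q' => ∃ p, p ∈ M.delta q a ∧ p ∈ S ∧ M.StepsIn S p u q'

/-- A finite path labelled by `u` from `q` to `q'`. -/
def NBA.Steps {A Q : Type*} (M : NBA A Q) : Q → List A → Q → Prop :=
  M.StepsIn Set.univ

/-- An accepting cycle at `q`: a nonempty cycle from `q` back to `q`
passing through a state of the accepting set. -/
def NBA.AccCycle {A Q : Type*} (M : NBA A Q) (q : Q) : Prop :=
  ∃ (f : Q) (u v : List A),
    f ∈ M.acc ∧ M.Steps q u f ∧ M.Steps f v q ∧ u ++ v ≠ []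

/-- A non-accepting cycle at `q`: a nonempty cycle from `q` back to `q`
none of whose states is accepting. -/
def NBA.RejCycle {A Q : Type*} (M : NBA A Q) (q : Q) : Prop :=
  ∃ u : List A, u ≠ [] ∧ q ∉ M.acc ∧ M.StepsIn M.accᶜ q u q

/-- Inherently weak: no reachable strongly connected component contains
both an accepting and a non-accepting cycle. -/
def NBA.InherentlyWeak {A Q : Type*} (M : NBA A Q) : Prop :=
  ¬ ∃ q₁ q₂ : Q,
      (∃ u, M.Steps M.init u q₁) ∧
      (∃ v, M.Steps q₁ v q₂) ∧ (∃ v, M.Steps q₂ v q₁) ∧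
      M.AccCycle q₁ ∧ M.RejCycle q₂

/-- Weakness: the state set partitions into components (fibers of `c`) each
entirely accepting or not, with a partial order making transitions
non-increasing. -/
def NBA.IsWeak {A Q : Type*} (M : NBA A Q) : Prop :=
  ∃ (ι : Type) (_ : PartialOrder ι) (c : Q → ι),
    (∀ q q', c q = c q' → (q ∈ M.acc ↔ q' ∈ M.acc)) ∧
    (∀ q a q', q' ∈ M.delta q a → c q' ≤ c q)

/-!
A state recurring infinitely often in a run closes a nonempty cycle between any two of its
visits. In an accepting run some accepting state recurs, so it lies on an accepting cycle and
hence in the new accepting set. Conversely, if a run recurs in a state `q` of the new set but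
visits `M.acc` only finitely often, then a late cycle through `q` is non-accepting, while the
component of `q` holds an accepting cycle and is reachable; inherent weakness forbids this.
The new accepting set is a union of components, so the reachability sets of states, which
shrink along transitions, order the components and make the automaton weak.
-/

lemma Set.Infinite.exists_infinite_fiber {α Q : Type*} [Finite Q] {π : α → Q} {S : Set Q}
    (hS : (π ⁻¹' S).Infinite) : ∃ q ∈ S, (π ⁻¹' {q}).Infinite := by
  by_contra! hfin
  exact hS ((S.toFinite.biUnion hfin).subset fun n hn => Set.mem_biUnion hn rfl)

namespace NBA

variable {A Q : Type*} (M : NBA A Q)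

def Reaches (q p : Q) : Prop := ∃ u, M.Steps q u p

def accSCC : Set Q := {q | ∃ q', M.Reaches q q' ∧ M.Reaches q' q ∧ M.AccCycle q'}

variable {M}

lemma StepsIn.append {S : Set Q} {u v : List A} {q p r : Q}
    (huv : M.StepsIn S q u p) (hv : M.StepsIn S p v r) : M.StepsIn S q (u ++ v) r := by
  induction u generalizing q with
  | nil => exact (huv : q = p) ▸ hv
  | cons a u ih =>
    obtain ⟨s, hs, hsS, hsu⟩ := huv
    exact ⟨s, hs, hsS, ih hsu⟩

lemma Reaches.refl (q : Q) : M.Reaches q q := ⟨[], rfl⟩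

lemma Reaches.trans {q p r : Q} (hqp : M.Reaches q p) (hpr : M.Reaches p r) :
    M.Reaches q r :=
  let ⟨u, hu⟩ := hqp
  let ⟨v, hv⟩ := hpr
  ⟨u ++ v, hu.append hv⟩

lemma Reaches.head {q p r : Q} {a : A} (hp : p ∈ M.delta q a) (hpr : M.Reaches p r) :
    M.Reaches q r :=
  let ⟨u, hu⟩ := hpr
  ⟨a :: u, p, hp, trivial, hu⟩

lemma mem_accSCC_of_accCycle {q : Q} (hq : M.AccCycle q) : q ∈ M.accSCC :=
  ⟨q, .refl q, .refl q, hq⟩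

lemma mem_accSCC_of_reaches {q p : Q} (hq : q ∈ M.accSCC) (hpq : M.Reaches p q)
    (hqp : M.Reaches q p) : p ∈ M.accSCC :=
  let ⟨q', hqq', hq'q, hq'⟩ := hq
  ⟨q', hpq.trans hqq', hq'q.trans hqp, hq'⟩

lemma mem_accSCC_congr {q p : Q} (hqp : M.Reaches q p) (hpq : M.Reaches p q) :
    q ∈ M.accSCC ↔ p ∈ M.accSCC :=
  ⟨fun hq => mem_accSCC_of_reaches hq hpq hqp, fun hp => mem_accSCC_of_reaches hp hqp hpq⟩

variable (M) in
theorem isWeak_withAcc_of_reaches [Countable Q] {F : Set Q}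
    (hF : ∀ q p, M.Reaches q p → M.Reaches p q → (q ∈ F ↔ p ∈ F)) :
    IsWeak { M with acc := F } := by
  obtain ⟨e, he⟩ := Countable.exists_injective_nat Q
  refine ⟨Set ℕ, inferInstance, fun q => e '' {p | M.Reaches q p}, ?_, ?_⟩
  · intro q p hqp
    have hreach : {r | M.Reaches q r} = {r | M.Reaches p r} := (Set.image_eq_image he).1 hqp
    exact hF q p ((Set.ext_iff.1 hreach p).2 (.refl p)) ((Set.ext_iff.1 hreach q).1 (.refl q))
  · exact fun q a p hp => Set.image_mono fun r hpr => Reaches.head hp hpr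

section Runs

variable {w : ℕ → A} {π : ℕ → Q}

lemma exists_stepsIn_of_run (hstep : ∀ i, π (i + 1) ∈ M.delta (π i) (w i)) (S : Set Q) :
    ∀ k n : ℕ, (∀ j, n < j → j ≤ n + k → π j ∈ S) →
      ∃ u : List A, u.length = k ∧ M.StepsIn S (π n) u (π (n + k))
  | 0, _, _ => ⟨[], rfl, rfl⟩
  | k + 1, n, hS => by
    obtain ⟨u, hu, hsteps⟩ := exists_stepsIn_of_run hstep S k (n + 1)
      fun j hj hjk => hS j (by omega) (by omega)
    rw [Nat.add_right_comm] at hsteps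
    exact ⟨w n :: u, by simp [hu], π (n + 1), hstep n, hS _ (by omega) (by omega), hsteps⟩

lemma IsRun.reaches (hπ : M.IsRun w π) (n : ℕ) : M.Reaches M.init (π n) := by
  obtain ⟨u, -, hu⟩ := exists_stepsIn_of_run hπ.2 Set.univ n 0 fun _ _ _ => trivial
  rw [Nat.zero_add, hπ.1] at hu
  exact ⟨u, hu⟩

lemma exists_cycle_of_run (hstep : ∀ i, π (i + 1) ∈ M.delta (π i) (w i)) {q : Q}
    (hq : (π ⁻¹' {q}).Infinite) {S : Set Q} {N : ℕ} (hS : ∀ j, N < j → π j ∈ S) :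
    ∃ u, u ≠ [] ∧ M.StepsIn S q u q := by
  obtain ⟨n, hn : π n = q, hNn⟩ := hq.exists_gt N
  obtain ⟨m, hm : π m = q, hnm⟩ := hq.exists_gt n
  obtain ⟨k, rfl⟩ := Nat.exists_eq_add_of_lt hnm
  obtain ⟨u, hu, hsteps⟩ := exists_stepsIn_of_run hstep S (k + 1) n
    fun j hj _ => hS j (by omega)
  rw [hn, ← Nat.add_assoc, hm] at hsteps
  exact ⟨u, List.ne_nil_of_length_pos (by omega), hsteps⟩

lemma accCycle_of_run (hstep : ∀ i, π (i + 1) ∈ M.delta (π i) (w i)) {q : Q}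
    (hacc : q ∈ M.acc) (hq : (π ⁻¹' {q}).Infinite) : M.AccCycle q := by
  obtain ⟨u, hu, hsteps⟩ :=
    exists_cycle_of_run hstep hq (S := Set.univ) (N := 0) fun _ _ => trivial
  exact ⟨q, u, [], hacc, hsteps, rfl, by simpa using hu⟩

lemma rejCycle_of_run (hstep : ∀ i, π (i + 1) ∈ M.delta (π i) (w i)) {q : Q}
    (hq : (π ⁻¹' {q}).Infinite) (hacc : (π ⁻¹' M.acc).Finite) : M.RejCycle q := by
  obtain ⟨N, hN⟩ := hacc.bddAbove
  have hlate : ∀ j, N < j → π j ∈ M.accᶜ := fun j hj hj' => (hN hj').not_gt hj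
  obtain ⟨u, hu, hsteps⟩ := exists_cycle_of_run hstep hq hlate
  obtain ⟨n, hn : π n = q, hNn⟩ := hq.exists_gt N
  exact ⟨u, hu, hn ▸ hlate n hNn, hsteps⟩

end Runs

lemma lang_subset_lang_withAcc_accSCC [Finite Q] :
    M.Lang ⊆ NBA.Lang { M with acc := M.accSCC } := by
  rintro w ⟨π, hπ, hacc⟩
  obtain ⟨f, hf, hinf⟩ := hacc.exists_infinite_fiber
  have hfF : f ∈ M.accSCC := mem_accSCC_of_accCycle (accCycle_of_run hπ.2 hf hinf)
  exact ⟨π, hπ, hinf.mono (Set.preimage_mono (Set.singleton_subset_iff.2 hfF))⟩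

lemma InherentlyWeak.lang_withAcc_accSCC_subset [Finite Q] (h : M.InherentlyWeak) :
    NBA.Lang { M with acc := M.accSCC } ⊆ M.Lang := by
  rintro w ⟨π, hπ, hF⟩
  refine ⟨π, hπ, not_not.1 fun hfin => ?_⟩
  obtain ⟨q, ⟨p, hqp, hpq, hp⟩, hq⟩ := hF.exists_infinite_fiber
  obtain ⟨n, hn : π n = q⟩ := hq.nonempty
  have hq_reach : M.Reaches M.init q := hn ▸ IsRun.reaches (M := M) hπ n
  exact h ⟨p, q, hq_reach.trans hqp, hpq, hqp, hp,
    rejCycle_of_run (M := M) hπ.2 hq (Set.not_infinite.1 hfin)⟩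

end NBA

/-- An inherently weak Büchi automaton can be converted into an equivalent
weak Büchi automaton over the same transition structure: declare a state
accepting iff its strongly connected component contains an accepting cycle
(ordering components by reachability); the resulting automaton is weak and
accepts the same ω-language. -/
theorem inherentlyWeak_to_weak {A Q : Type*} [Finite Q]
    (M : NBA A Q) (h : M.InherentlyWeak) :
    ∃ F' : Set Q,
      (∀ q, q ∈ F' ↔ ∃ q' : Q,
        (∃ u, M.Steps q u q') ∧ (∃ u, M.Steps q' u q) ∧ M.AccCycle q') ∧
      NBA.IsWeak ⟨M.delta, M.init, F'⟩ ∧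
      NBA.Lang ⟨M.delta, M.init, F'⟩ = M.Lang :=
  ⟨M.accSCC, fun _ => Iff.rfl,
    M.isWeak_withAcc_of_reaches fun _ _ => NBA.mem_accSCC_congr,
    h.lang_withAcc_accSCC_subset.antisymm NBA.lang_subset_lang_withAcc_accSCC⟩
end

section
/- If S ⊆ ℝⁿ is open in the Euclidean topology, then the language L(S) of all base-r encodings of vectors of S is the intersection of an open set and a closed set in the prefix-distance topology on (Σ)^ω, where Σ = {0,…,r−1}ⁿ ∪ {⋆}; specifically L(S) = (L(S) ∪ V̄₊) \ V̄₊ where L(S) ∪ V̄₊ is open and V̄₊ (words with an invalid structure containing at least one separator) is open. -/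
/-- The alphabet `Σ = {0,…,r−1}ⁿ ∪ {⋆}`: `some s` is a digit vector,
`none` is the separator `⋆`. -/
abbrev Alph (n r : ℕ) := Option (Fin n → Fin r)

/-- A sign symbol: a digit vector all of whose components are `0` or `r−1`. -/
def SignSym {n r : ℕ} (s : Fin n → Fin r) : Prop :=
  ∀ i, (s i : ℕ) = 0 ∨ (s i : ℕ) = r - 1

/-- The set `V = {0,r−1}ⁿ · (Σ\{⋆})* · {⋆} · (Σ\{⋆})^ω` of structurally
valid encodings: a sign symbol, then exactly one separator, at position ≥ 1. -/
def ValidEnc {n r : ℕ} : Set (ℕ → Alph n r) :=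
  {w | (∃ s, w 0 = some s ∧ SignSym s) ∧
    ∃ k, 1 ≤ k ∧ w k = none ∧ ∀ j, j ≠ k → w j ≠ none}

/-- The set `V̄₊ = (({0,r−1}ⁿ·Σ*·{⋆}) ∪ (Σ\{0,r−1}ⁿ)) · Σ* · {⋆} · Σ^ω` of
words containing at least one separator but not validly encoding a vector. -/
def VbarPlus {n r : ℕ} : Set (ℕ → Alph n r) :=
  {w | ∃ k, w k = none ∧
    ((∃ s, w 0 = some s ∧ SignSym s ∧ ∃ j, 1 ≤ j ∧ j < k ∧ w j = none) ∨
     ((¬ ∃ s, w 0 = some s ∧ SignSym s) ∧ 1 ≤ k))}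

/-- Length of the longest common prefix of two distinct infinite words. -/
noncomputable def commonLen {A : Type*} (w w' : ℕ → A) : ℕ :=
  sInf {n | w n ≠ w' n}

/-- The prefix distance on infinite words. -/
noncomputable def wdist {A : Type*} (w w' : ℕ → A) : ℝ :=
  letI := Classical.propDecidable (w = w')
  if w = w' then 0 else 1 / (commonLen w w' + 1)

/-- Openness in the prefix-distance topology on `Σ^ω`. -/
def IsOpenW {A : Type*} (U : Set (ℕ → A)) : Prop :=
  ∀ w ∈ U, ∃ ε : ℝ, 0 < ε ∧ ∀ w', wdist w w' < ε → w' ∈ U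

/-- The real value, for component `j`, of the encoding with integer-part
length `k` given by integer digits `dI 0 … dI (k-1)` (most significant
first, `dI 0` the sign digit, r's complement for negatives) and fractional
digits `dF 0, dF 1, …`. -/
noncomputable def encVal {n r : ℕ} (k : ℕ)
    (dI dF : ℕ → Fin n → Fin r) (j : Fin n) : ℝ :=
  (∑ i ∈ Finset.range k, ((dI i j : ℕ) : ℝ) * (r : ℝ) ^ (k - 1 - i)) -
    (if (dI 0 j : ℕ) = r - 1 then (r : ℝ) ^ k else 0) +
    ∑' i : ℕ, ((dF i j : ℕ) : ℝ) * (1 / (r : ℝ)) ^ (i + 1)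

/-- The word `w` is a base-`r` encoding of the vector `x ∈ ℝⁿ`: it has the
form `w_I ⋆ w_F` with a sign prefix, and componentwise decodes to `x`. -/
def Encodes {n r : ℕ} (w : ℕ → Alph n r) (x : Fin n → ℝ) : Prop :=
  ∃ (k : ℕ) (dI dF : ℕ → Fin n → Fin r),
    1 ≤ k ∧ SignSym (dI 0) ∧
    (∀ i, i < k → w i = some (dI i)) ∧ w k = none ∧
    (∀ i, w (k + 1 + i) = some (dF i)) ∧
    ∀ j, x j = encVal k dI dF j

/-- The language `L(S)` of all base-`r` encodings of vectors of `S ⊆ ℝⁿ`. -/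
def LangOf {n r : ℕ} (S : Set (Fin n → ℝ)) : Set (ℕ → Alph n r) :=
  {w | ∃ x ∈ S, Encodes w x}

/-! Membership in `V̄₊` is witnessed by a finite prefix, so `V̄₊` is open. A word that shares a
long enough prefix with an encoding `w_I ⋆ w_F` of `x ∈ S` either contains a second separator,
and then lies in `V̄₊`, or is an encoding `w_I ⋆ w_F'` whose fractional digits agree with those
of `w_F` on a long prefix; since decoding fractional digits is continuous for the product
topology, it encodes a point near `x`, hence of `S`. Finally no encoding lies in `V̄₊`,
because an encoding has exactly one separator and starts with a sign symbol. -/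

open Set PiNat Topology

lemma mem_cylinder_of_wdist_lt {A : Type*} {w w' : ℕ → A} {N : ℕ}
    (h : wdist w w' < 1 / (N + 1)) : w' ∈ cylinder w N := by
  intro i hi
  by_cases hww' : w = w'
  · rw [hww']
  rw [wdist, if_neg hww', one_div_lt_one_div (by positivity) (by positivity)] at h
  have hN : N < commonLen w w' := by exact_mod_cast (add_lt_add_iff_right 1).mp h
  exact (not_not.mp (Nat.notMem_of_lt_sInf (hi.trans hN))).symm

lemma isOpenW_of_forall_exists_cylinder_subset {A : Type*} {U : Set (ℕ → A)}
    (h : ∀ w ∈ U, ∃ N, cylinder w N ⊆ U) : IsOpenW U := by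
  intro w hw
  obtain ⟨N, hN⟩ := h w hw
  exact ⟨1 / (N + 1), by positivity, fun w' hw' => hN (mem_cylinder_of_wdist_lt hw')⟩

lemma exists_cylinder_subset_of_mem_nhds {E : ℕ → Type*} [∀ i, TopologicalSpace (E i)]
    [∀ i, DiscreteTopology (E i)] {x : ∀ i, E i} {s : Set (∀ i, E i)} (hs : s ∈ 𝓝 x) :
    ∃ N, cylinder x N ⊆ s := by
  obtain ⟨_, ⟨y, N, rfl⟩, hx, hsub⟩ := (isTopologicalBasis_cylinders E).mem_nhds_iff.mp hs
  exact ⟨N, by rwa [mem_cylinder_iff_eq.mp hx]⟩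

lemma tsum_digits_eq_ofDigits {r : ℕ} (d : ℕ → Fin r) :
    ∑' i, ((d i : ℕ) : ℝ) * (1 / (r : ℝ)) ^ (i + 1) = Real.ofDigits d := by
  simp only [Real.ofDigits, Real.ofDigitsTerm, one_div, inv_pow]

section Encodings

variable {n r : ℕ}

lemma continuous_encVal (k : ℕ) (dI : ℕ → Fin n → Fin r) :
    Continuous fun dF : ℕ → Fin n → Fin r => fun j => encVal k dI dF j := by
  refine continuous_pi fun j => continuous_const.add ?_
  simp only [tsum_digits_eq_ofDigits]
  exact Real.continuous_ofDigits.comp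
    (continuous_pi fun i => (continuous_apply j).comp (continuous_apply i))

lemma exists_cylinder_subset_vbarPlus {w : ℕ → Alph n r} (hw : w ∈ VbarPlus) :
    ∃ N, cylinder w N ⊆ VbarPlus := by
  obtain ⟨k, hk, hcase⟩ := hw
  refine ⟨k + 1, fun w' hw' => ⟨k, (hw' k k.lt_succ_self).trans hk, ?_⟩⟩
  rcases hcase with ⟨s, h0, hs, j, hj, hjk, hjsep⟩ | ⟨hsign, hk⟩
  · exact Or.inl ⟨s, (hw' 0 (by omega)).trans h0, hs, j, hj, hjk, (hw' j (by omega)).trans hjsep⟩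
  · exact Or.inr ⟨by rwa [hw' 0 (by omega)], hk⟩

lemma isOpenW_vbarPlus : IsOpenW (VbarPlus (n := n) (r := r)) :=
  isOpenW_of_forall_exists_cylinder_subset fun _ => exists_cylinder_subset_vbarPlus

lemma Encodes.exists_signSym {w : ℕ → Alph n r} {x : Fin n → ℝ} (h : Encodes w x) :
    ∃ s, w 0 = some s ∧ SignSym s := by
  obtain ⟨k, dI, -, hk, hsign, hI, -⟩ := h
  exact ⟨dI 0, hI 0 hk, hsign⟩

lemma Encodes.subsingleton_setOf_eq_none {w : ℕ → Alph n r} {x : Fin n → ℝ} (h : Encodes w x) :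
    {i | w i = none}.Subsingleton := by
  obtain ⟨k, dI, dF, -, -, hI, -, hF, -⟩ := h
  suffices ∀ i, w i = none → i = k from fun i hi j hj => (this i hi).trans (this j hj).symm
  intro i hi
  by_contra hik
  rcases Nat.lt_or_gt_of_ne hik with hlt | hgt
  · simp [hI i hlt] at hi
  · obtain ⟨l, rfl⟩ := Nat.exists_eq_add_of_le hgt
    simp [hF l] at hi

lemma Encodes.notMem_vbarPlus {w : ℕ → Alph n r} {x : Fin n → ℝ} (h : Encodes w x) :
    w ∉ VbarPlus := by
  rintro ⟨k, hk, ⟨-, -, -, j, -, hjk, hj⟩ | ⟨hsign, -⟩⟩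
  · exact hjk.ne (h.subsingleton_setOf_eq_none hj hk)
  · exact hsign h.exists_signSym

lemma exists_cylinder_subset_langOf_union_vbarPlus {S : Set (Fin n → ℝ)} (hS : IsOpen S)
    {w : ℕ → Alph n r} (hw : w ∈ LangOf S) : ∃ N, cylinder w N ⊆ LangOf S ∪ VbarPlus := by
  obtain ⟨x, hx, k, dI, dF, hk, hsign, hI, hsep, hF, hval⟩ := hw
  have hxS : (fun j => encVal k dI dF j) ∈ S := funext hval ▸ hx
  obtain ⟨m, hm⟩ := exists_cylinder_subset_of_mem_nhds
    (((continuous_encVal k dI).isOpen_preimage S hS).mem_nhds hxS)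
  refine ⟨k + 1 + m, fun w' hw' => ?_⟩
  have hI' : ∀ i < k, w' i = some (dI i) := fun i hi => (hw' i (by omega)).trans (hI i hi)
  have hsep' : w' k = none := (hw' k (by omega)).trans hsep
  by_cases hsep₂ : ∃ i, k < i ∧ w' i = none
  · obtain ⟨i, hki, hi⟩ := hsep₂
    exact Or.inr ⟨i, hi, Or.inl ⟨dI 0, hI' 0 hk, hsign, k, hk, hki, hsep'⟩⟩
  push Not at hsep₂
  choose dF' hF' using fun i => Option.ne_none_iff_exists'.mp (hsep₂ (k + 1 + i) (by omega))
  have hdF' : dF' ∈ cylinder dF m := fun i hi => by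
    simpa [hw' (k + 1 + i) (by omega), hF i] using (hF' i).symm
  exact Or.inl ⟨_, hm hdF', k, dI, dF', hk, hsign, hI', hsep', hF', fun _ => rfl⟩

end Encodings

theorem langOf_open_inter_closed_general {n r : ℕ}
    (S : Set (Fin n → ℝ)) (hS : IsOpen S) :
    IsOpenW (LangOf (r := r) S ∪ VbarPlus) ∧
    IsOpenW (VbarPlus (n := n) (r := r)) ∧
    LangOf (r := r) S = (LangOf (r := r) S ∪ VbarPlus) \ VbarPlus := by
  refine ⟨isOpenW_of_forall_exists_cylinder_subset ?_, isOpenW_vbarPlus, ?_⟩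
  · rintro w (hw | hw)
    · exact exists_cylinder_subset_langOf_union_vbarPlus hS hw
    · obtain ⟨N, hN⟩ := exists_cylinder_subset_vbarPlus hw
      exact ⟨N, hN.trans subset_union_right⟩
  · have hdisj : Disjoint (LangOf (r := r) S) VbarPlus :=
      disjoint_left.mpr fun _ ⟨_, _, hx⟩ => hx.notMem_vbarPlus
    rw [union_sdiff_right, hdisj.sdiff_eq_left]

/-- If `S ⊆ ℝⁿ` is open in the Euclidean topology, then the language `L(S)`
of all its base-`r` encodings is the intersection of an open set and a
closed set in the prefix-distance topology on `Σ^ω`: specifically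
`L(S) = (L(S) ∪ V̄₊) \ V̄₊`, where `L(S) ∪ V̄₊` and `V̄₊` are open. -/
theorem langOf_open_inter_closed {n r : ℕ} (hn : 0 < n) (hr : 2 ≤ r)
    (S : Set (Fin n → ℝ)) (hS : IsOpen S) :
    IsOpenW (LangOf (r := r) S ∪ VbarPlus) ∧
    IsOpenW (VbarPlus (n := n) (r := r)) ∧
    LangOf (r := r) S = (LangOf (r := r) S ∪ VbarPlus) \ VbarPlus :=
  langOf_open_inter_closed_general S hS
end
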